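/- arXiv:2302.08974 — 4 statements merged into one kernel-verified Lean document; each statement's English description precedes it below -/
import Mathlib

section
/- Let a : Fin m → Fin C be a sequence and σ a permutation of Fin m. The constant sequence a_C (all entries equal to the maximal symbol C) satisfies: the monomial M^σ_{a_C}(Z) = Z_C^{m(m+1)/2}, and for any sequence b not equal to a_C and any permutation τ, the monomial M^τ_b is not equal to Z_C^{m(m+1)/2}. -/
open MvPolynomial

/-- The monomial `M^σ_a(Z) = ∏ i, Z_{a i}^{σ i}`, with exponents in `{1,…,m}`. -/
noncomputable def seqMonomial {m C : ℕ} (a : Fin m → Fin C) (σ : Equiv.Perm (Fin m)) :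
    MvPolynomial (Fin C) ℤ :=
  ∏ i : Fin m, (X (a i)) ^ ((σ i : ℕ) + 1)

theorem Equiv.Perm.sum_val_add_one {m : ℕ} (σ : Equiv.Perm (Fin m)) :
    ∑ i : Fin m, ((σ i : ℕ) + 1) = m * (m + 1) / 2 := by
  rw [Equiv.sum_comp σ (fun i : Fin m => (i : ℕ) + 1), Fin.sum_univ_eq_sum_range (· + 1),
    ← add_zero (Finset.sum _ _), ← Finset.sum_range_succ' (fun i => i) m, Finset.sum_range_id,
    Nat.add_sub_cancel, mul_comm]

theorem seqMonomial_const {m C : ℕ} (c : Fin C) (σ : Equiv.Perm (Fin m)) :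
    seqMonomial (fun _ => c) σ = X c ^ (m * (m + 1) / 2) := by
  rw [seqMonomial, Finset.prod_pow_eq_pow_sum, σ.sum_val_add_one]

theorem eval_seqMonomial_eq_zero {m C : ℕ} (b : Fin m → Fin C) (τ : Equiv.Perm (Fin m))
    {f : Fin C → ℤ} {j : Fin m} (hj : f (b j) = 0) :
    eval f (seqMonomial b τ) = 0 := by
  rw [seqMonomial, map_prod]
  exact Finset.prod_eq_zero (Finset.mem_univ j) (by simp [hj])

-- Evaluating at the indicator of the complement of `{b j}` kills `seqMonomial b τ` but not
-- `X c ^ n` when `b j ≠ c`.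
theorem eq_of_seqMonomial_eq_X_pow {m C : ℕ} {b : Fin m → Fin C} {τ : Equiv.Perm (Fin m)}
    {c : Fin C} {n : ℕ} (h : seqMonomial b τ = X c ^ n) (j : Fin m) : b j = c := by
  by_contra hne
  let f : Fin C → ℤ := fun k => if k = b j then 0 else 1
  have hc : eval f (X c ^ n) = 1 := by simp [f, Ne.symm hne]
  rw [← h, eval_seqMonomial_eq_zero b τ (j := j) (by simp [f])] at hc
  exact zero_ne_one hc

theorem maximal_sequence_monomial_general (m C : ℕ)
    (σ : Equiv.Perm (Fin m)) :
    seqMonomial (fun _ : Fin m => Fin.last C) σ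
      = (X (Fin.last C) : MvPolynomial (Fin (C + 1)) ℤ) ^ (m * (m + 1) / 2) ∧
    ∀ (b : Fin m → Fin (C + 1)) (τ : Equiv.Perm (Fin m)),
      b ≠ (fun _ => Fin.last C) →
      seqMonomial b τ ≠ (X (Fin.last C)) ^ (m * (m + 1) / 2) :=
  ⟨seqMonomial_const _ σ, fun _ _ hb h => hb (funext (eq_of_seqMonomial_eq_X_pow h))⟩

/-- The constant sequence at the maximal symbol gives the monomial `Z_C^{m(m+1)/2}`,
and no other sequence gives this monomial for any permutation. -/
theorem maximal_sequence_monomial (m C : ℕ) (hm : 0 < m)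
    (σ : Equiv.Perm (Fin m)) :
    seqMonomial (fun _ : Fin m => Fin.last C) σ
      = (X (Fin.last C) : MvPolynomial (Fin (C + 1)) ℤ) ^ (m * (m + 1) / 2) ∧
    ∀ (b : Fin m → Fin (C + 1)) (τ : Equiv.Perm (Fin m)),
      b ≠ (fun _ => Fin.last C) →
      seqMonomial b τ ≠ (X (Fin.last C)) ^ (m * (m + 1) / 2) :=
  maximal_sequence_monomial_general m C σ
end

section
/- Let a : Fin m → Fin C be a sequence, and let τ be a permutation of Fin m attuned to a (τ takes its largest values on the positions where a takes the symbol C, its next largest values on the positions where a takes C-1, and so on). If b ≠ a is another sequence with M^τ_b = M^τ_a as monomials, then b ≻ a in the lexicographic count order. -/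
open MvPolynomial

def seqCount {m C : ℕ} (a : Fin m → Fin C) (c : Fin C) : ℕ :=
  (Finset.univ.filter (fun i => a i = c)).card

/-- `a ≻ b` in the lexicographic count order. -/
def seqSucc {m C : ℕ} (a b : Fin m → Fin C) : Prop :=
  ∃ c : Fin C, (∀ c' : Fin C, c < c' → seqCount a c' = seqCount b c') ∧
    seqCount b c < seqCount a c

/-- `τ` is attuned to `a`: positions carrying larger symbols receive larger values of `τ`,
i.e. `τ` takes its largest values on `I_C`, its next largest on `I_{C-1}`, etc. -/
def Attuned {m C : ℕ} (τ : Equiv.Perm (Fin m)) (a : Fin m → Fin C) : Prop :=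
  ∀ i j : Fin m, a i < a j → τ i < τ j

/-!
Write `w i = τ i + 1` for the exponent at position `i`. Equality of the monomials says that for
every symbol `c` the positions carrying `c` have the same total weight under `a` and under `b`;
summing over symbols, the same holds for the threshold sets `{i | c ≤ a i}` and `{i | c ≤ b i}`.
Since `τ` is attuned to `a`, the threshold set of `a` consists of the positions of largest weight,
and a set of positive weights with no more elements than such a top set reaches its total only by
being equal to it. Going down from the largest symbol, as long as `b` does not overtake `a` in the
count order, the counts of `b` and `a` therefore agree symbol by symbol, and then all threshold sets
agree, which forces `b = a`.
-/

open Finset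

namespace Finset

variable {ι κ M : Type*}

theorem eq_of_sum_eq_of_card_le_of_forall_lt [DecidableEq ι] {w : ι → ℕ} {A B : Finset ι}
    (hpos : ∀ i ∈ A, 0 < w i) (htop : ∀ i ∈ A, ∀ j ∉ A, w j < w i) (hcard : #B ≤ #A)
    (hsum : ∑ i ∈ B, w i = ∑ i ∈ A, w i) : B = A := by
  by_contra hne
  have hAB : (A \ B).Nonempty :=
    sdiff_nonempty.2 fun hsub => hne (eq_of_subset_of_card_le hsub hcard).symm
  obtain ⟨x, hx, hmin⟩ := exists_min_image (A \ B) w hAB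
  have hxA : x ∈ A := (mem_sdiff.1 hx).1
  have hsdiff : ∑ i ∈ B \ A, w i = ∑ i ∈ A \ B, w i := by
    have hB := sum_inter_add_sum_sdiff B A w
    have hA := sum_inter_add_sum_sdiff A B w
    rw [inter_comm] at hA
    omega
  have hcard' : #(B \ A) ≤ #(A \ B) := by
    have hB := card_sdiff_add_card_inter B A
    have hA := card_sdiff_add_card_inter A B
    rw [inter_comm] at hA
    omega
  have hbelow : ∀ j ∈ B \ A, w j ≤ w x - 1 := fun j hj =>
    Nat.le_sub_one_of_lt (htop x hxA j (mem_sdiff.1 hj).2)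
  have hx_pos := hpos x hxA
  have hAB_card := card_pos.2 hAB
  refine lt_irrefl (∑ i ∈ A \ B, w i) ?_
  calc ∑ i ∈ A \ B, w i = ∑ i ∈ B \ A, w i := hsdiff.symm
    _ ≤ #(B \ A) * (w x - 1) := by simpa using sum_le_card_nsmul _ _ _ hbelow
    _ ≤ #(A \ B) * (w x - 1) := Nat.mul_le_mul_right _ hcard'
    _ < #(A \ B) * w x := Nat.mul_lt_mul_of_pos_left (by omega) hAB_card
    _ ≤ ∑ i ∈ A \ B, w i := by simpa using card_nsmul_le_sum _ _ _ hmin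

variable [Fintype ι] [DecidableEq κ] [Fintype κ]

theorem sum_filter_comp_eq_of_sum_fiber_eq [AddCommMonoid M] {f g : ι → κ} {w : ι → M}
    (p : κ → Prop) [DecidablePred p]
    (h : ∀ c, p c → ∑ i with f i = c, w i = ∑ i with g i = c, w i) :
    ∑ i with p (f i), w i = ∑ i with p (g i), w i := by
  have hf := sum_fiberwise_eq_sum_filter univ {c | p c} f w
  have hg := sum_fiberwise_eq_sum_filter univ {c | p c} g w
  simp only [mem_filter, mem_univ, true_and] at hf hg
  rw [← hf, ← hg]
  exact sum_congr rfl fun c hc => h c (mem_filter.1 hc).2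

theorem card_filter_comp_eq_of_card_fiber_eq {f g : ι → κ} (p : κ → Prop) [DecidablePred p]
    (h : ∀ c, p c → #{i | f i = c} = #{i | g i = c}) :
    #{i | p (f i)} = #{i | p (g i)} := by
  simp only [card_eq_sum_ones] at h ⊢
  exact sum_filter_comp_eq_of_sum_fiber_eq p h

end Finset

section LinearOrder

variable {ι κ : Type*} [Fintype ι] [LinearOrder κ]

theorem card_filter_le_eq_card_filter_eq_add [DecidableEq ι] (g : ι → κ) (c : κ) :
    #{i | c ≤ g i} = #{i | g i = c} + #{i | c < g i} := by
  rw [← card_union_of_disjoint (disjoint_filter.2 fun i _ h => h.symm.not_lt)]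
  congr 1
  ext i
  simp [le_iff_eq_or_lt, eq_comm]

theorem eq_of_forall_filter_le_eq {f g : ι → κ}
    (h : ∀ c, univ.filter (c ≤ f ·) = univ.filter (c ≤ g ·)) : f = g := by
  funext i
  have hfg : f i ≤ g i := by simpa using (Finset.ext_iff.1 (h (f i)) i).1 (by simp)
  have hgf : g i ≤ f i := by simpa using (Finset.ext_iff.1 (h (g i)) i).2 (by simp)
  exact le_antisymm hfg hgf

end LinearOrder

section Attuned

variable {m C : ℕ} {a b : Fin m → Fin C} {τ : Equiv.Perm (Fin m)}

theorem seqMonomial_eq_monomial (a : Fin m → Fin C) (σ : Equiv.Perm (Fin m)) :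
    seqMonomial a σ = monomial (∑ i, Finsupp.single (a i) ((σ i : ℕ) + 1)) (1 : ℤ) := by
  rw [seqMonomial, monomial_sum_one]
  simp_rw [X_pow_eq_monomial]

theorem sum_fiber_eq_of_seqMonomial_eq (heq : seqMonomial b τ = seqMonomial a τ) (c : Fin C) :
    ∑ i with b i = c, ((τ i : ℕ) + 1) = ∑ i with a i = c, ((τ i : ℕ) + 1) := by
  rw [seqMonomial_eq_monomial, seqMonomial_eq_monomial] at heq
  have := congrArg (· c) (monomial_left_injective one_ne_zero heq)
  simpa only [Finsupp.finsetSum_apply, Finsupp.single_apply, sum_filter] using this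

theorem filter_le_eq_of_seqCount_le (hτ : Attuned τ a) (heq : seqMonomial b τ = seqMonomial a τ)
    {c : Fin C} (habove : ∀ c', c < c' → seqCount b c' = seqCount a c')
    (hle : seqCount b c ≤ seqCount a c) :
    univ.filter (c ≤ b ·) = univ.filter (c ≤ a ·) := by
  refine eq_of_sum_eq_of_card_le_of_forall_lt (w := fun i => (τ i : ℕ) + 1)
    (fun i _ => Nat.succ_pos _) ?_ ?_ ?_
  · intro i hi j hj
    simp only [mem_filter, mem_univ, true_and, not_le] at hi hj
    exact Nat.succ_lt_succ (hτ j i (hj.trans_le hi))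
  · rw [card_filter_le_eq_card_filter_eq_add, card_filter_le_eq_card_filter_eq_add,
      card_filter_comp_eq_of_card_fiber_eq (c < ·) habove]
    exact Nat.add_le_add_right hle _
  · exact sum_filter_comp_eq_of_sum_fiber_eq (c ≤ ·)
      fun c' _ => sum_fiber_eq_of_seqMonomial_eq heq c'

theorem seqCount_eq_of_filter_le_eq {c : Fin C}
    (habove : ∀ c', c < c' → seqCount b c' = seqCount a c')
    (h : univ.filter (c ≤ b ·) = univ.filter (c ≤ a ·)) :
    seqCount b c = seqCount a c := by
  have := congrArg card h
  rw [card_filter_le_eq_card_filter_eq_add, card_filter_le_eq_card_filter_eq_add,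
    card_filter_comp_eq_of_card_fiber_eq (c < ·) habove] at this
  exact Nat.add_right_cancel this

end Attuned

theorem monomial_eq_attuned_implies_succ (m C : ℕ)
    (a b : Fin m → Fin C) (τ : Equiv.Perm (Fin m))
    (hτ : Attuned τ a) (hne : b ≠ a)
    (heq : seqMonomial b τ = seqMonomial a τ) :
    seqSucc b a := by
  by_contra hsucc
  have hcount : ∀ c, seqCount b c = seqCount a c := by
    intro c
    induction c using WellFoundedGT.induction with
    | _ c ih =>
      have hle : seqCount b c ≤ seqCount a c :=
        not_lt.1 fun hlt => hsucc ⟨c, ih, hlt⟩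
      exact seqCount_eq_of_filter_le_eq ih (filter_le_eq_of_seqCount_le hτ heq ih hle)
  exact hne <| eq_of_forall_filter_le_eq fun c =>
    filter_le_eq_of_seqCount_le hτ heq (fun c' _ => hcount c') (hcount c).le
end

section
/- Let a : Fin m → Fin C and let τ be attuned to a. If b : Fin m → Fin C satisfies ∑_{i : b(i)=c} τ(i) = ∑_{i : a(i)=c} τ(i) for all c ∈ Fin C, then either b = a, or the number of occurrences of the maximal symbol C in b is at least the number of occurrences of C in a. -/
/-!
The positions where `a` carries the maximal symbol get the largest values of `τ`. Exchanging
some of them for strictly fewer other positions therefore strictly lowers the total weight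
`∑ (τ i + 1)`, so `b` cannot reproduce that weight with fewer occurrences of the maximal symbol.
-/

theorem Finset.sum_lt_sum_of_card_lt_of_forall_le {ι M : Type*} [AddCommMonoid M] [LinearOrder M]
    [IsOrderedCancelAddMonoid M] [DecidableEq ι] {s t : Finset ι} {f : ι → M}
    (hcard : s.card < t.card) (hpos : ∀ j ∈ t \ s, 0 < f j)
    (hle : ∀ i ∈ s \ t, ∀ j ∈ t \ s, f i ≤ f j) :
    ∑ i ∈ s, f i < ∑ i ∈ t, f i := by
  rw [← Finset.sum_sdiff_lt_sum_sdiff]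
  have hcard' := Finset.card_sdiff_lt_card_sdiff_iff.mpr hcard
  obtain ⟨j₀, hj₀, hmin⟩ := (t \ s).exists_min_image f (Finset.card_pos.mp (by omega))
  calc ∑ i ∈ s \ t, f i ≤ (s \ t).card • f j₀ :=
        Finset.sum_le_card_nsmul _ _ _ fun i hi => hle i hi j₀ hj₀
    _ < (t \ s).card • f j₀ := nsmul_lt_nsmul_left (hpos j₀ hj₀) hcard'
    _ ≤ ∑ i ∈ t \ s, f i := Finset.card_nsmul_le_sum _ _ _ hmin

theorem Attuned.lt_of_eq_last {m C : ℕ} {τ : Equiv.Perm (Fin m)} {a : Fin m → Fin (C + 1)}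
    (hτ : Attuned τ a) {i j : Fin m} (hi : a i ≠ Fin.last C) (hj : a j = Fin.last C) :
    τ i < τ j :=
  hτ i j (hj ▸ Fin.lt_last_iff_ne_last.mpr hi)

/-- If the exponent sums of `b` and `a` with respect to a permutation attuned to `a`
agree for every symbol, then either `b = a` or `b` has at least as many occurrences
of the maximal symbol as `a`. -/
theorem attuned_sum_eq_max_symbol (m C : ℕ)
    (a b : Fin m → Fin (C + 1)) (τ : Equiv.Perm (Fin m))
    (hτ : Attuned τ a)
    (hsum : ∀ c : Fin (C + 1),
      ∑ i ∈ Finset.univ.filter (fun i => b i = c), ((τ i : ℕ) + 1)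
        = ∑ i ∈ Finset.univ.filter (fun i => a i = c), ((τ i : ℕ) + 1)) :
    b = a ∨ seqCount a (Fin.last C) ≤ seqCount b (Fin.last C) := by
  right
  by_contra! hlt
  refine (hsum (Fin.last C)).not_lt (Finset.sum_lt_sum_of_card_lt_of_forall_le hlt
    (fun _ _ => Nat.succ_pos _) fun i hi j hj => ?_)
  simp only [Finset.mem_sdiff, Finset.mem_filter, Finset.mem_univ, true_and] at hi hj
  exact Nat.succ_le_succ (hτ.lt_of_eq_last hi.2 hj.1).le
end

section
/- Let k ≥ 2 and let Q be a polynomial of total degree strictly less than k(k+1)/2 in the coordinates of its #S⁰_{k+1} vector arguments in ℝ^k, invariant under all permutations of those arguments. Then for all x ∈ ℝ^{k+1}: Q((x_σ)_{σ ∈ S⁰_{k+1}}) = Q((x_σ)_{σ ∈ S¹_{k+1}}), where x_σ = (x_{σ(1)},...,x_{σ(k)}). -/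
/-!
The difference `D` of the two sides is a polynomial in `x₀, …, xₖ` of degree less than
`k(k+1)/2`. Substituting `x_b` for `x_a` turns each even tuple `x_σ` into the odd tuple
`x_{(a b)σ}`, so by the symmetry of `Q` it kills `D`: every `X_a - X_b` divides `D`. These are
pairwise non-associated primes, so the Vandermonde product, of degree `k(k+1)/2`, divides `D`,
which forces `D = 0`.
-/

open MvPolynomial

namespace MvPolynomial

theorem rename_eq_of_forall_rename_perm_eq {R ι J κ τ : Type*} [CommSemiring R]
    {Q : MvPolynomial (ι × κ) R}
    (hQ : ∀ π : Equiv.Perm ι, rename (fun p : ι × κ => (π p.1, p.2)) Q = Q)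
    (F : J → κ → τ) (φ ψ : ι ≃ J) :
    rename (fun p => F (φ p.1) p.2) Q = rename (fun p => F (ψ p.1) p.2) Q := by
  conv_lhs => rw [← hQ (ψ.trans φ.symm), rename_rename]
  simp [Function.comp_def]

variable {σ R : Type*} [CommRing R]

theorem prime_X_sub_X [IsDomain R] {a b : σ} (hab : a ≠ b) :
    Prime (X a - X b : MvPolynomial σ R) := by
  classical
  let φ := (renameEquiv R (Equiv.optionSubtypeNe a).symm).trans (optionEquivLeft R {t // t ≠ a})
  have hφ : φ (X a - X b) = Polynomial.X - Polynomial.C (X ⟨b, hab.symm⟩) := by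
    simp [φ, Equiv.optionSubtypeNe_symm_of_ne hab.symm, optionEquivLeft_X_some,
      optionEquivLeft_X_none]
  exact (MulEquiv.prime_iff φ).mp (hφ ▸ Polynomial.prime_X_sub_C _)

theorem X_sub_X_dvd_iff_rename_update_eq_zero [DecidableEq σ] {a b : σ} {p : MvPolynomial σ R} :
    X a - X b ∣ p ↔ rename (Function.update id a b) p = 0 := by
  set u := Function.update id a b
  have hu : ∀ t, X a - X b ∣ (X t - X (u t) : MvPolynomial σ R) := fun t => by
    by_cases h : t = a <;> simp [u, h]
  have key : ∀ q : MvPolynomial σ R, X a - X b ∣ q - rename u q := fun q => by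
    induction q using MvPolynomial.induction_on with
    | C c => simp
    | add p q hp hq => simpa [add_sub_add_comm] using dvd_add hp hq
    | mul_X p t hp =>
      rw [map_mul, rename_X,
        show p * X t - rename u p * X (u t) = (p - rename u p) * X t + rename u p * (X t - X (u t))
          by ring]
      exact dvd_add (hp.mul_right _) ((hu t).mul_left _)
  constructor
  · rintro ⟨q, rfl⟩
    simp [u, Function.update_apply]
  · intro hp
    simpa [hp] using key p

theorem X_sub_X_dvd_X_sub_X_iff [Nontrivial R] {a b c d : σ} (hcd : c ≠ d) :
    (X a - X b : MvPolynomial σ R) ∣ X c - X d ↔ s(a, b) = s(c, d) := by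
  classical
  rw [X_sub_X_dvd_iff_rename_update_eq_zero, map_sub, rename_X, rename_X, sub_eq_zero,
    X_injective.eq_iff, Sym2.eq_iff]
  simp only [Function.update_apply, id]
  by_cases hc : c = a <;> by_cases hd : d = a <;> simp_all [eq_comm]

section Vandermonde

variable (σ R) [Fintype σ] [LinearOrder σ]

noncomputable def vandermonde : MvPolynomial σ R :=
  ∏ x ∈ {x : σ × σ | x.1 < x.2}, (X x.1 - X x.2)

variable {σ R}

theorem vandermonde_ne_zero [IsDomain R] : vandermonde σ R ≠ 0 :=
  Finset.prod_ne_zero_iff.mpr fun _ hx => (prime_X_sub_X (Finset.mem_filter.mp hx).2.ne).ne_zero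

theorem totalDegree_vandermonde [IsDomain R] :
    (vandermonde σ R).totalDegree = (Fintype.card σ).choose 2 := by
  have hhom : (vandermonde σ R).IsHomogeneous (∑ _ ∈ {x : σ × σ | x.1 < x.2}, 1) :=
    IsHomogeneous.prod _ _ _ fun _ _ => (isHomogeneous_X _ _).sub (isHomogeneous_X _ _)
  rw [hhom.totalDegree vandermonde_ne_zero, ← Finset.card_eq_sum_ones,
    Fintype.card_product_filter_lt]

theorem vandermonde_dvd [IsDomain R] {p : MvPolynomial σ R}
    (hp : ∀ a b, a ≠ b → X a - X b ∣ p) : vandermonde σ R ∣ p := by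
  classical
  rw [vandermonde, Finset.prod_eq_multiset_prod]
  refine Multiset.prod_primes_dvd p ?_ ?_ fun q => ?_
  · simp only [Multiset.mem_map, Finset.mem_val, Finset.mem_filter]
    rintro _ ⟨x, ⟨-, hx⟩, rfl⟩
    exact prime_X_sub_X hx.ne
  · simp only [Multiset.mem_map, Finset.mem_val, Finset.mem_filter]
    rintro _ ⟨x, ⟨-, hx⟩, rfl⟩
    exact hp _ _ hx.ne
  rw [Multiset.countP_map, ← Finset.filter_val, ← Finset.card_def, Finset.card_le_one]
  simp only [Finset.mem_filter, Finset.mem_univ, true_and]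
  rintro x ⟨hx, hqx⟩ y ⟨hy, hqy⟩
  have hxy := (X_sub_X_dvd_X_sub_X_iff hy.ne).mp (hqx.symm.trans hqy).dvd
  rw [Sym2.eq_iff] at hxy
  rcases hxy with ⟨h1, h2⟩ | ⟨h1, h2⟩
  · exact Prod.ext h1 h2
  · exact absurd (h1 ▸ h2 ▸ hx) hy.not_gt

end Vandermonde

end MvPolynomial

theorem Function.update_id_swap_apply {α : Type*} [DecidableEq α] (a b t : α) :
    Function.update id a b (Equiv.swap a b t) = Function.update id a b t := by
  simp only [Function.update_apply, Equiv.swap_apply_def, id]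
  split_ifs <;> simp_all

theorem even_odd_eq_of_low_degree_general (k : ℕ)
    (Q : MvPolynomial ({σ : Equiv.Perm (Fin (k + 1)) // Equiv.Perm.sign σ = 1} × Fin k) ℝ)
    (hdeg : Q.totalDegree < k * (k + 1) / 2)
    (hQ : ∀ π : Equiv.Perm {σ : Equiv.Perm (Fin (k + 1)) // Equiv.Perm.sign σ = 1},
      rename (fun p : {σ : Equiv.Perm (Fin (k + 1)) // Equiv.Perm.sign σ = 1} × Fin k =>
        (π p.1, p.2)) Q = Q)
    (e : {σ : Equiv.Perm (Fin (k + 1)) // Equiv.Perm.sign σ = 1}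
      ≃ {σ : Equiv.Perm (Fin (k + 1)) // Equiv.Perm.sign σ = -1}) :
    ∀ x : Fin (k + 1) → ℝ,
      eval (fun p => x ((p.1 : Equiv.Perm (Fin (k + 1))) p.2.succ)) Q
        = eval (fun p => x (((e p.1 : {σ : Equiv.Perm (Fin (k + 1)) // Equiv.Perm.sign σ = -1})
            : Equiv.Perm (Fin (k + 1))) p.2.succ)) Q := by
  classical
  set D := rename (fun p => (p.1 : Equiv.Perm (Fin (k + 1))) p.2.succ) Q
    - rename (fun p => ((e p.1 : {σ : Equiv.Perm (Fin (k + 1)) // Equiv.Perm.sign σ = -1})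
        : Equiv.Perm (Fin (k + 1))) p.2.succ) Q
  have hdvd : ∀ a b, a ≠ b → X a - X b ∣ D := by
    intro a b hab
    let swapMul : {σ : Equiv.Perm (Fin (k + 1)) // Equiv.Perm.sign σ = 1}
        ≃ {σ : Equiv.Perm (Fin (k + 1)) // Equiv.Perm.sign σ = -1} :=
      (Equiv.mulLeft (Equiv.swap a b)).subtypeEquiv fun σ => by simp [Equiv.Perm.sign_swap hab]
    rw [X_sub_X_dvd_iff_rename_update_eq_zero, map_sub, rename_rename, rename_rename, sub_eq_zero]
    let F (σ : {σ : Equiv.Perm (Fin (k + 1)) // Equiv.Perm.sign σ = -1}) (j : Fin k) :=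
      Function.update id a b ((σ : Equiv.Perm (Fin (k + 1))) j.succ)
    calc rename (Function.update id a b ∘ _) Q
        = rename (fun p => F (swapMul p.1) p.2) Q := by
          congr 2
          funext p
          simp [F, swapMul, Function.update_id_swap_apply]
      _ = rename (fun p => F (e p.1) p.2) Q := rename_eq_of_forall_rename_perm_eq hQ F swapMul e
  have hD : D = 0 := by
    by_contra hD
    have hV := totalDegree_le_of_dvd_of_isDomain (vandermonde_dvd hdvd) hD
    rw [totalDegree_vandermonde, Fintype.card_fin, Nat.choose_two_right, Nat.add_sub_cancel] at hV
    have hDQ : D.totalDegree ≤ Q.totalDegree :=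
      (totalDegree_sub _ _).trans (max_le (totalDegree_rename_le _ _) (totalDegree_rename_le _ _))
    rw [mul_comm] at hdeg
    omega
  intro x
  simpa [D, sub_eq_zero, eval_rename, Function.comp_def] using congrArg (eval x) hD

/-- A permutation-invariant polynomial `Q` of the source tuples of total degree
strictly less than `k(k+1)/2` takes equal values on the even- and odd-indexed families. -/
theorem even_odd_eq_of_low_degree (k : ℕ) (hk : 2 ≤ k)
    (Q : MvPolynomial ({σ : Equiv.Perm (Fin (k + 1)) // Equiv.Perm.sign σ = 1} × Fin k) ℝ)
    (hdeg : Q.totalDegree < k * (k + 1) / 2)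
    (hQ : ∀ π : Equiv.Perm {σ : Equiv.Perm (Fin (k + 1)) // Equiv.Perm.sign σ = 1},
      rename (fun p : {σ : Equiv.Perm (Fin (k + 1)) // Equiv.Perm.sign σ = 1} × Fin k =>
        (π p.1, p.2)) Q = Q)
    (e : {σ : Equiv.Perm (Fin (k + 1)) // Equiv.Perm.sign σ = 1}
      ≃ {σ : Equiv.Perm (Fin (k + 1)) // Equiv.Perm.sign σ = -1}) :
    ∀ x : Fin (k + 1) → ℝ,
      eval (fun p => x ((p.1 : Equiv.Perm (Fin (k + 1))) p.2.succ)) Q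
        = eval (fun p => x (((e p.1 : {σ : Equiv.Perm (Fin (k + 1)) // Equiv.Perm.sign σ = -1})
            : Equiv.Perm (Fin (k + 1))) p.2.succ)) Q :=
  even_odd_eq_of_low_degree_general k Q hdeg hQ e
end
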